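/- For 0 ≤ r ≤ 2 and t > 0, the risk of hard thresholding at the origin satisfies ρ_H(t, 0) = 2∫_t^∞ z^r φ(z) dz = 2 t^r Φ̄(t)(1 + θ t^{-2}) for some θ ∈ [0, r]. In particular 2 t^r Φ̄(t) ≤ 2∫_t^∞ z^r φ(z) dz ≤ 2 t^r Φ̄(t)(1 + r t^{-2}). -/

import Mathlib

/-!
The lower bound is `z ^ r ≥ t ^ r` on `(t, ∞)`. For the upper bound, concavity of `x ↦ x ^ (r / 2)`
(this is where `r ≤ 2` enters) gives the tangent-line bound
`z ^ r ≤ t ^ r + (r / 2) t ^ (r - 2) (z² - t²)`, and Gaussian integration by parts gives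
`∫_t^∞ (z² - t²) φ = t φ(t) + (1 - t²) Φ̄(t) ≤ 2 Φ̄(t)`. The last inequality is the Mills-type
bound `t φ(t) ≤ (1 + t²) Φ̄(t)`, which is just `∫_t^∞ (z - t)² φ ≥ 0` written out with the first
two tail moments. The constant `θ` is then read off from the two bounds.
-/

open MeasureTheory Set

/-- Standard Gaussian density. -/
noncomputable def gphi (v : ℝ) : ℝ := (Real.sqrt (2 * Real.pi))⁻¹ * Real.exp (-v ^ 2 / 2)

/-- Standard Gaussian upper tail probability. -/
noncomputable def PhiBar (v : ℝ) : ℝ := ∫ x in Set.Ioi v, gphi x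

/-- Standard Gaussian CDF. -/
noncomputable def Phi (v : ℝ) : ℝ := ∫ x in Set.Iic v, gphi x

open Real Filter Topology

lemma gphi_pos (v : ℝ) : 0 < gphi v := by
  unfold gphi; positivity

lemma gphi_eq_mul_exp (v : ℝ) : gphi v = (√(2 * π))⁻¹ * exp (-(1 / 2) * v ^ 2) := by
  unfold gphi; ring_nf

lemma hasDerivAt_gphi (v : ℝ) : HasDerivAt gphi (-(v * gphi v)) v := by
  have h : HasDerivAt (fun v : ℝ => -v ^ 2 / 2) (-v) v :=
    ((hasDerivAt_pow 2 v).neg.div_const 2).congr_deriv (by push_cast; ring)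
  exact (h.exp.const_mul (√(2 * π))⁻¹).congr_deriv (by simp only [gphi]; ring)

lemma integrable_rpow_mul_gphi {r : ℝ} (hr : -1 < r) :
    Integrable fun z : ℝ => z ^ r * gphi z := by
  refine ((integrable_rpow_mul_exp_neg_mul_sq (b := 1 / 2) (by norm_num) hr).const_mul
    (√(2 * π))⁻¹).congr (Eventually.of_forall fun z => ?_)
  simp only [gphi_eq_mul_exp]; ring

lemma integrable_pow_mul_gphi (n : ℕ) : Integrable fun z : ℝ => z ^ n * gphi z := by
  simpa using integrable_rpow_mul_gphi (r := n) (by linarith [n.cast_nonneg (α := ℝ)])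

lemma integrable_gphi : Integrable gphi := by
  simpa using integrable_pow_mul_gphi 0

lemma tendsto_pow_mul_gphi_atTop (n : ℕ) :
    Tendsto (fun z : ℝ => z ^ n * gphi z) atTop (𝓝 0) := by
  have h := ((tendsto_rpow_abs_mul_exp_neg_mul_sq_cocompact (a := 1 / 2) (by norm_num) n).mono_left
    atTop_le_cocompact).const_mul (√(2 * π))⁻¹
  rw [mul_zero] at h
  refine h.congr' ?_
  filter_upwards [eventually_ge_atTop 0] with z hz
  rw [abs_of_nonneg hz, rpow_natCast, gphi_eq_mul_exp]; ring

lemma PhiBar_pos (t : ℝ) : 0 < PhiBar t := by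
  rw [PhiBar, setIntegral_pos_iff_support_of_nonneg_ae
    (Eventually.of_forall fun v => (gphi_pos v).le) integrable_gphi.integrableOn,
    Function.support_eq_univ fun v => (gphi_pos v).ne', univ_inter, volume_Ioi]
  simp

lemma integral_Ioi_mul_gphi (t : ℝ) : ∫ z in Ioi t, z * gphi z = gphi t := by
  have h := integral_Ioi_of_hasDerivAt_of_tendsto' (a := t) (f := fun z => -gphi z)
    (fun z _ => (hasDerivAt_gphi z).neg) (by simpa using (integrable_pow_mul_gphi 1).integrableOn)
    (by simpa using (tendsto_pow_mul_gphi_atTop 0).neg)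
  simpa using h

lemma integral_Ioi_sq_mul_gphi (t : ℝ) :
    ∫ z in Ioi t, z ^ 2 * gphi z = t * gphi t + PhiBar t := by
  have hderiv : ∀ z ∈ Ici t, HasDerivAt (fun z => -(z * gphi z)) (z ^ 2 * gphi z - gphi z) z :=
    fun z _ => (((hasDerivAt_id' z).mul (hasDerivAt_gphi z)).neg).congr_deriv (by ring)
  have h := integral_Ioi_of_hasDerivAt_of_tendsto' hderiv
    ((integrable_pow_mul_gphi 2).sub integrable_gphi).integrableOn
    (by simpa using (tendsto_pow_mul_gphi_atTop 1).neg)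
  rw [integral_sub (integrable_pow_mul_gphi 2).integrableOn integrable_gphi.integrableOn] at h
  rw [PhiBar]; linarith

lemma integral_Ioi_sub_sq_mul_gphi (t : ℝ) :
    ∫ z in Ioi t, (z - t) ^ 2 * gphi z = (1 + t ^ 2) * PhiBar t - t * gphi t := by
  have h2 : IntegrableOn (fun z => z ^ 2 * gphi z) (Ioi t) :=
    (integrable_pow_mul_gphi 2).integrableOn
  have h1 : IntegrableOn (fun z => 2 * t * (z * gphi z)) (Ioi t) := by
    simpa using ((integrable_pow_mul_gphi 1).const_mul (2 * t)).integrableOn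
  have h21 : IntegrableOn (fun z => z ^ 2 * gphi z - 2 * t * (z * gphi z)) (Ioi t) := h2.sub h1
  have h0 : IntegrableOn (fun z => t ^ 2 * gphi z) (Ioi t) :=
    (integrable_gphi.const_mul _).integrableOn
  have hsplit : ∫ z in Ioi t, (z - t) ^ 2 * gphi z = (∫ z in Ioi t, z ^ 2 * gphi z)
      - (∫ z in Ioi t, 2 * t * (z * gphi z)) + ∫ z in Ioi t, t ^ 2 * gphi z := by
    rw [← integral_sub h2 h1, ← integral_add h21 h0]
    exact integral_congr_ae (Eventually.of_forall fun z => by ring)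
  rw [hsplit, integral_const_mul, integral_const_mul, integral_Ioi_sq_mul_gphi,
    integral_Ioi_mul_gphi, ← PhiBar]
  ring

lemma mul_gphi_le_one_add_sq_mul_PhiBar (t : ℝ) : t * gphi t ≤ (1 + t ^ 2) * PhiBar t := by
  have h : 0 ≤ ∫ z in Ioi t, (z - t) ^ 2 * gphi z :=
    setIntegral_nonneg measurableSet_Ioi fun z _ => by have := gphi_pos z; positivity
  rw [integral_Ioi_sub_sq_mul_gphi] at h
  linarith

lemma integrableOn_sq_sub_sq_mul_gphi (t : ℝ) :
    IntegrableOn (fun z => (z ^ 2 - t ^ 2) * gphi z) (Ioi t) :=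
  ((integrable_pow_mul_gphi 2).sub (integrable_gphi.const_mul (t ^ 2))).integrableOn.congr_fun
    (fun z _ => by simp only [Pi.sub_apply]; ring) measurableSet_Ioi

lemma integral_Ioi_sq_sub_sq_mul_gphi_le (t : ℝ) :
    ∫ z in Ioi t, (z ^ 2 - t ^ 2) * gphi z ≤ 2 * PhiBar t := by
  have h2 : IntegrableOn (fun z => z ^ 2 * gphi z) (Ioi t) :=
    (integrable_pow_mul_gphi 2).integrableOn
  have h0 : IntegrableOn (fun z => t ^ 2 * gphi z) (Ioi t) :=
    (integrable_gphi.const_mul _).integrableOn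
  have hsplit : ∫ z in Ioi t, (z ^ 2 - t ^ 2) * gphi z
      = (∫ z in Ioi t, z ^ 2 * gphi z) - ∫ z in Ioi t, t ^ 2 * gphi z := by
    rw [← integral_sub h2 h0]
    exact integral_congr_ae (Eventually.of_forall fun z => by ring)
  rw [hsplit, integral_const_mul, integral_Ioi_sq_mul_gphi, ← PhiBar]
  linarith [mul_gphi_le_one_add_sq_mul_PhiBar t]

lemma rpow_le_rpow_add_mul_sq_sub_sq {r t z : ℝ} (hr0 : 0 ≤ r) (hr2 : r ≤ 2) (ht : 0 < t)
    (hz : 0 ≤ z) : z ^ r ≤ t ^ r + r / 2 * t ^ (r - 2) * (z ^ 2 - t ^ 2) := by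
  have hbern := rpow_one_add_le_one_add_mul_self (s := z ^ 2 / t ^ 2 - 1)
    (by linarith [div_nonneg (sq_nonneg z) (sq_nonneg t)]) (p := r / 2) (by linarith)
    (by linarith)
  have hpow : ∀ x : ℝ, 0 ≤ x → (x ^ 2) ^ (r / 2) = x ^ r := fun x hx => by
    rw [← rpow_natCast_mul hx]; congr 1; push_cast; ring
  rw [add_sub_cancel, div_rpow (by positivity) (by positivity), hpow z hz, hpow t ht.le,
    div_le_iff₀ (by positivity)] at hbern
  have htr : t ^ (r - 2) * t ^ 2 = t ^ r := by
    rw [rpow_sub ht, rpow_two, div_mul_cancel₀ _ (by positivity)]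
  calc z ^ r ≤ (1 + r / 2 * (z ^ 2 / t ^ 2 - 1)) * t ^ r := hbern
    _ = t ^ r + r / 2 * t ^ (r - 2) * (z ^ 2 - t ^ 2) := by
      rw [← htr]; field_simp

lemma rpow_mul_PhiBar_le_integral_Ioi {r t : ℝ} (hr : 0 ≤ r) (ht : 0 ≤ t) :
    t ^ r * PhiBar t ≤ ∫ z in Ioi t, z ^ r * gphi z := by
  rw [PhiBar, ← integral_const_mul]
  exact setIntegral_mono_on (integrable_gphi.const_mul _).integrableOn
    (integrable_rpow_mul_gphi (by linarith)).integrableOn measurableSet_Ioi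
    fun z hz => mul_le_mul_of_nonneg_right (rpow_le_rpow ht (le_of_lt hz) hr) (gphi_pos z).le

lemma integral_Ioi_rpow_mul_gphi_le {r t : ℝ} (hr0 : 0 ≤ r) (hr2 : r ≤ 2) (ht : 0 < t) :
    ∫ z in Ioi t, z ^ r * gphi z ≤ t ^ r * PhiBar t * (1 + r / t ^ 2) := by
  set c := r / 2 * t ^ (r - 2) with hc_def
  have hc : 0 ≤ c := by positivity
  have h0 : IntegrableOn (fun z => t ^ r * gphi z) (Ioi t) :=
    (integrable_gphi.const_mul _).integrableOn
  have h2 : IntegrableOn (fun z => c * ((z ^ 2 - t ^ 2) * gphi z)) (Ioi t) :=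
    (integrableOn_sq_sub_sq_mul_gphi t).const_mul c
  calc ∫ z in Ioi t, z ^ r * gphi z
      ≤ ∫ z in Ioi t, (t ^ r * gphi z + c * ((z ^ 2 - t ^ 2) * gphi z)) := by
        refine setIntegral_mono_on (integrable_rpow_mul_gphi (by linarith)).integrableOn
          (h0.add h2) measurableSet_Ioi fun z hz => ?_
        have := mul_le_mul_of_nonneg_right
          (rpow_le_rpow_add_mul_sq_sub_sq hr0 hr2 ht (ht.trans hz).le) (gphi_pos z).le
        exact this.trans_eq (by ring)
    _ = t ^ r * PhiBar t + c * ∫ z in Ioi t, (z ^ 2 - t ^ 2) * gphi z := by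
        rw [integral_add h0 h2, integral_const_mul, integral_const_mul, PhiBar]
    _ ≤ t ^ r * PhiBar t + c * (2 * PhiBar t) := by
        gcongr; exact integral_Ioi_sq_sub_sq_mul_gphi_le t
    _ = t ^ r * PhiBar t * (1 + r / t ^ 2) := by
        rw [hc_def, rpow_sub ht, rpow_two]; field_simp

lemma exists_eq_mul_one_add_div_of_le {B I r s : ℝ} (hB : 0 < B) (hs : 0 < s) (hlow : B ≤ I)
    (hup : I ≤ B * (1 + r / s)) : ∃ θ, 0 ≤ θ ∧ θ ≤ r ∧ I = B * (1 + θ / s) := by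
  refine ⟨(I / B - 1) * s, ?_, ?_, ?_⟩
  · have : 1 ≤ I / B := (one_le_div hB).mpr hlow
    nlinarith
  · have : I / B ≤ 1 + r / s := (div_le_iff₀ hB).mpr (by linarith)
    calc (I / B - 1) * s ≤ r / s * s := by gcongr; linarith
      _ = r := div_mul_cancel₀ r hs.ne'
  · field_simp; ring

theorem stmt9 (r t : ℝ) (hr0 : 0 ≤ r) (hr2 : r ≤ 2) (ht : 0 < t) :
    ∃ θ : ℝ, 0 ≤ θ ∧ θ ≤ r ∧
      2 * (∫ z in Set.Ioi t, z ^ r * gphi z) = 2 * t ^ r * PhiBar t * (1 + θ / t ^ 2) ∧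
      2 * t ^ r * PhiBar t ≤ 2 * (∫ z in Set.Ioi t, z ^ r * gphi z) ∧
      2 * (∫ z in Set.Ioi t, z ^ r * gphi z) ≤ 2 * t ^ r * PhiBar t * (1 + r / t ^ 2) := by
  have hlow := rpow_mul_PhiBar_le_integral_Ioi hr0 ht.le
  have hup := integral_Ioi_rpow_mul_gphi_le hr0 hr2 ht
  have hB : 0 < t ^ r * PhiBar t := mul_pos (rpow_pos_of_pos ht r) (PhiBar_pos t)
  obtain ⟨θ, hθ0, hθr, hθ⟩ := exists_eq_mul_one_add_div_of_le hB (by positivity) hlow hup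
  refine ⟨θ, hθ0, hθr, ?_, ?_, ?_⟩
  · rw [hθ]; ring
  · linarith
  · linarith
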